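/- Let i, o be natural numbers and let S_{i,o} be the oriented star with centre x, i leaves each with an arc into x, and o leaves each with an arc out of x. Then for every natural number k ≥ 1, f_o(S_{i,o}, k) = k · f(K_{i,o}, k-1), where f(K_{i,o}, m) is the number of proper m-colourings of the complete bipartite graph with parts of sizes i and o. -/

import Mathlib

/-- An oriented colouring of an oriented graph. -/
def OColoring {V : Type*} (A : V → V → Prop) {k : ℕ} (c : V → Fin k) : Prop :=
  (∀ u v, A u v → c u ≠ c v) ∧
  (∀ u v x y, A u v → A x y → c u = c y → c v ≠ c x)

/-- The number of oriented `k`-colourings of the oriented graph `G = (V, A)`. -/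
noncomputable def foO {V : Type*} (A : V → V → Prop) (k : ℕ) : ℕ :=
  Nat.card {c : V → Fin k // OColoring A c}

/-- The number of proper `m`-colourings of the simple graph with adjacency relation `adj`. -/
noncomputable def properCount {V : Type*} (adj : V → V → Prop) (m : ℕ) : ℕ :=
  Nat.card {c : V → Fin m // ∀ u v, adj u v → c u ≠ c v}

/-- Arc relation of the oriented star `S_{i,o}`: centre `none`, with `i` in-leaves
`some (Sum.inl j)` and `o` out-leaves `some (Sum.inr j)`. -/
def starArc (i o : ℕ) (u v : Option (Fin i ⊕ Fin o)) : Prop :=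
  (∃ j : Fin i, u = some (Sum.inl j) ∧ v = none) ∨
  (∃ j : Fin o, u = none ∧ v = some (Sum.inr j))

/-- Adjacency relation of the complete bipartite graph `K_{i,o}`. -/
def kioAdj (i o : ℕ) (u v : Fin i ⊕ Fin o) : Prop :=
  (∃ (a : Fin i) (b : Fin o), u = Sum.inl a ∧ v = Sum.inr b) ∨
  (∃ (a : Fin o) (b : Fin i), u = Sum.inr a ∧ v = Sum.inl b)

/-!
In `S_{i,o}` every in-leaf reaches every out-leaf by a directed 2-path through the centre, so an
oriented colouring of `S_{i,o}` is exactly a proper colouring of the cone over `K_{i,o}`. The apex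
of a cone takes any of the `k` colours, and the base is then properly coloured with the `k - 1`
colours that remain.
-/

variable {W : Type*}

def coneAdj (R : W → W → Prop) : Option W → Option W → Prop
  | some u, some v => R u v
  | none, none => False
  | _, _ => True

lemma properColoring_coneAdj_iff (R : W → W → Prop) {m : ℕ} (c : Option W → Fin m) :
    (∀ u v, coneAdj R u v → c u ≠ c v) ↔
      (∀ w, c (some w) ≠ c none) ∧ ∀ u v, R u v → c (some u) ≠ c (some v) := by
  refine ⟨fun h => ⟨fun w => h (some w) none trivial, fun u v => h (some u) (some v)⟩, ?_⟩
  rintro ⟨hapex, hbase⟩ (_ | u) (_ | v) huv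
  · exact huv.elim
  · exact (hapex v).symm
  · exact hapex u
  · exact hbase u v huv

def properColoringAvoidingEquiv (R : W → W → Prop) {n : ℕ} (p : Fin (n + 1)) :
    {f : W → Fin (n + 1) // (∀ w, f w ≠ p) ∧ ∀ u v, R u v → f u ≠ f v} ≃
      {g : W → Fin n // ∀ u v, R u v → g u ≠ g v} where
  toFun f := ⟨fun w => (finSuccAboveEquiv p).symm ⟨f.1 w, f.2.1 w⟩, fun u v huv h =>
    f.2.2 u v huv (by simpa using congrArg (fun z => (finSuccAboveEquiv p z).1) h)⟩
  invFun g := ⟨fun w => p.succAbove (g.1 w), fun w => p.succAbove_ne _,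
    fun u v huv h => g.2 u v huv (Fin.succAbove_right_injective h)⟩
  left_inv f := Subtype.ext <| funext fun w =>
    congrArg Subtype.val ((finSuccAboveEquiv p).apply_symm_apply _)
  right_inv g := Subtype.ext <| funext fun w => (finSuccAboveEquiv p).symm_apply_apply (g.1 w)

theorem properCount_coneAdj (R : W → W → Prop) (n : ℕ) :
    properCount (coneAdj R) (n + 1) = (n + 1) * properCount R n := by
  let e := calc
    {c : Option W → Fin (n + 1) // ∀ u v, coneAdj R u v → c u ≠ c v}
      ≃ {c : Fin (n + 1) × (W → Fin (n + 1)) //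
          (∀ w, c.2 w ≠ c.1) ∧ ∀ u v, R u v → c.2 u ≠ c.2 v} :=
        Equiv.subtypeEquiv Equiv.piOptionEquivProd (properColoring_coneAdj_iff R)
    _ ≃ Σ p : Fin (n + 1), {f : W → Fin (n + 1) // (∀ w, f w ≠ p) ∧ ∀ u v, R u v → f u ≠ f v} :=
        Equiv.subtypeProdEquivSigmaSubtype fun p (f : W → Fin (n + 1)) =>
          (∀ w, f w ≠ p) ∧ ∀ u v, R u v → f u ≠ f v
    _ ≃ Fin (n + 1) × {g : W → Fin n // ∀ u v, R u v → g u ≠ g v} :=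
        (Equiv.sigmaCongrRight (properColoringAvoidingEquiv R)).trans (Equiv.sigmaEquivProd _ _)
  rw [properCount, properCount, Nat.card_congr e, Nat.card_prod, Nat.card_fin]

lemma oColoring_starArc_iff (i o k : ℕ) (c : Option (Fin i ⊕ Fin o) → Fin k) :
    OColoring (starArc i o) c ↔ ∀ u v, coneAdj (kioAdj i o) u v → c u ≠ c v := by
  constructor
  · rintro ⟨hne, hdist⟩ (_ | u) (_ | v) huv
    · exact huv.elim
    · rcases v with j | j
      · exact (hne _ _ (Or.inl ⟨j, rfl, rfl⟩)).symm
      · exact hne _ _ (Or.inr ⟨j, rfl, rfl⟩)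
    · rcases u with j | j
      · exact hne _ _ (Or.inl ⟨j, rfl, rfl⟩)
      · exact (hne _ _ (Or.inr ⟨j, rfl, rfl⟩)).symm
    · rcases huv with ⟨a, b, rfl, rfl⟩ | ⟨a, b, rfl, rfl⟩
      · exact fun h => hdist _ _ _ _ (Or.inl ⟨a, rfl, rfl⟩) (Or.inr ⟨b, rfl, rfl⟩) h rfl
      · exact fun h => hdist _ _ _ _ (Or.inl ⟨b, rfl, rfl⟩) (Or.inr ⟨a, rfl, rfl⟩) h.symm rfl
  · intro h
    refine ⟨?_, ?_⟩
    · rintro u v (⟨j, rfl, rfl⟩ | ⟨j, rfl, rfl⟩) <;> exact h _ _ trivial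
    · rintro u v x y (⟨j, rfl, rfl⟩ | ⟨j, rfl, rfl⟩) (⟨j', rfl, rfl⟩ | ⟨j', rfl, rfl⟩) hcol
      · exact absurd hcol (h _ _ trivial)
      · exact absurd hcol (h _ _ (Or.inl ⟨j, j', rfl, rfl⟩))
      · exact h _ _ (Or.inr ⟨j, j', rfl, rfl⟩)
      · exact absurd hcol (h _ _ trivial)

theorem stmt_10 (i o : ℕ) :
    ∀ k : ℕ, 1 ≤ k →
      foO (starArc i o) k = k * properCount (kioAdj i o) (k - 1) := by
  rintro (_ | n) hk
  · omega
  rw [foO, Nat.card_congr (Equiv.subtypeEquivRight (oColoring_starArc_iff i o _)),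
    ← properCount, properCount_coneAdj, Nat.add_sub_cancel]
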